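/- arXiv:1609.03543 — 2 statements merged into one kernel-verified Lean document; each statement's English description precedes it below -/
import Mathlib

section
/- Let Γ be a consistent, computably enumerable theory and P = (P_n) a logical inductor over Γ. Then P_∞ is coherent in the sense of Gaifman: (i) if Γ ⊢ φ then P_∞(φ) = 1; (ii) if Γ ⊢ ¬φ then P_∞(φ) = 0; (iii) if Γ ⊢ ¬(φ ∧ ψ) then P_∞(φ ∨ ψ) = P_∞(φ) + P_∞(ψ). (These are exactly the conditions under which Pr({W ∈ PC(Γ) : W(φ) = 1}) := P_∞(φ) extends to a probability measure on the set PC(Γ) of worlds consistent with Γ.) -/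
open Filter

namespace LogicalInduction

/-- Sentences: Boolean combinations of countably many atomic sentences. -/
inductive Sentence : Type
  | atom : ℕ → Sentence
  | not : Sentence → Sentence
  | and : Sentence → Sentence → Sentence
  | or : Sentence → Sentence → Sentence
  | imp : Sentence → Sentence → Sentence
  | iff : Sentence → Sentence → Sentence
  deriving DecidableEq

/-- A fixed computable encoding of sentences into `ℕ`. -/
def encodeSentence : Sentence → ℕ
  | .atom k => Nat.pair 0 k
  | .not φ => Nat.pair 1 (encodeSentence φ)
  | .and φ ψ => Nat.pair 2 (Nat.pair (encodeSentence φ) (encodeSentence ψ))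
  | .or φ ψ => Nat.pair 3 (Nat.pair (encodeSentence φ) (encodeSentence ψ))
  | .imp φ ψ => Nat.pair 4 (Nat.pair (encodeSentence φ) (encodeSentence ψ))
  | .iff φ ψ => Nat.pair 5 (Nat.pair (encodeSentence φ) (encodeSentence ψ))

/-- Worlds: `{0,1}`-valued valuations, represented as boolean truth assignments. -/
abbrev World : Type := Sentence → Bool

/-- The real value (0 or 1) that a world assigns to a sentence. -/
noncomputable def World.val (W : World) (φ : Sentence) : ℝ := if W φ then 1 else 0

/-- Propositional consistency: the truth values respect the Boolean connectives. -/
def World.PCons (W : World) : Prop :=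
  (∀ φ, W (.not φ) = !W φ) ∧
  (∀ φ ψ, W (.and φ ψ) = (W φ && W ψ)) ∧
  (∀ φ ψ, W (.or φ ψ) = (W φ || W ψ)) ∧
  (∀ φ ψ, W (.imp φ ψ) = (!W φ || W ψ)) ∧
  (∀ φ ψ, W (.iff φ ψ) = (W φ == W ψ))

/-- `PC D`: propositionally consistent worlds assigning `true` to every element of `D`. -/
def PC (D : Set Sentence) : Set World := {W | W.PCons ∧ ∀ φ ∈ D, W φ = true}

/-- `Γ ⊢ φ`: every world propositionally consistent with `Γ` makes `φ` true. -/
def Proves (Γ : Set Sentence) (φ : Sentence) : Prop := ∀ W ∈ PC Γ, W φ = true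

/-- A theory is consistent if some propositionally consistent world satisfies it. -/
def Consistent (Γ : Set Sentence) : Prop := (PC Γ).Nonempty

/-- Expressible features: formal expressions built from rational constants, price
symbols `φ^{*i}`, addition, multiplication, max, and safe reciprocation. -/
inductive Feature : Type
  | const : ℚ → Feature
  | price : Sentence → ℕ → Feature
  | add : Feature → Feature → Feature
  | mul : Feature → Feature → Feature
  | max : Feature → Feature → Feature
  | safeInv : Feature → Feature

/-- Value of an expressible feature on a sequence of (real-valued) valuations. -/
noncomputable def Feature.eval (V : ℕ → Sentence → ℝ) : Feature → ℝ
  | .const q => (q : ℝ)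
  | .price φ i => V i φ
  | .add f g => f.eval V + g.eval V
  | .mul f g => f.eval V * g.eval V
  | .max f g => Max.max (f.eval V) (g.eval V)
  | .safeInv f => 1 / Max.max 1 (f.eval V)

/-- Rank of a feature: the largest day whose prices it mentions. -/
def Feature.rank : Feature → ℕ
  | .const _ => 0
  | .price _ i => i
  | .add f g => Max.max f.rank g.rank
  | .mul f g => Max.max f.rank g.rank
  | .max f g => Max.max f.rank g.rank
  | .safeInv f => f.rank

/-- A fixed computable encoding of features into `ℕ`. -/
def encodeFeature : Feature → ℕ
  | .const q => Nat.pair 0 (Encodable.encode q)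
  | .price φ i => Nat.pair 1 (Nat.pair (encodeSentence φ) i)
  | .add f g => Nat.pair 2 (Nat.pair (encodeFeature f) (encodeFeature g))
  | .mul f g => Nat.pair 3 (Nat.pair (encodeFeature f) (encodeFeature g))
  | .max f g => Nat.pair 4 (Nat.pair (encodeFeature f) (encodeFeature g))
  | .safeInv f => Nat.pair 5 (encodeFeature f)

/-- A fixed computable encoding of lists into `ℕ`. -/
def encodeList {α : Type} (e : α → ℕ) : List α → ℕ
  | [] => 0
  | a :: l => Nat.pair (e a) (encodeList e l) + 1

/-- A trading strategy: a finite formal sum `ξ₁·(φ₁ − φ₁^{*n}) + ⋯ + ξ_k·(φ_k − φ_k^{*n})`,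
recorded as the list of pairs `(ξ_j, φ_j)`. -/
structure Trade : Type where
  terms : List (Feature × Sentence)

/-- The empty (zero) trading strategy. -/
def zeroTrade : Trade := ⟨[]⟩

/-- A trading strategy is valid for day `n` if all its features have rank `≤ n`. -/
def Trade.RankLE (T : Trade) (n : ℕ) : Prop := ∀ p ∈ T.terms, Feature.rank p.1 ≤ n

/-- `T[φ]`: the (evaluated) coefficient of the sentence `φ` in the trade `T`. -/
noncomputable def Trade.coef (T : Trade) (V : ℕ → Sentence → ℝ) (φ : Sentence) : ℝ :=
  ((T.terms.filter fun p => decide (p.2 = φ)).map fun p => p.1.eval V).sum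

/-- `T[1]`: the cash term of a day-`n` trading strategy, `-Σ_j ξ_j·φ_j^{*n}`. -/
noncomputable def Trade.cash (T : Trade) (n : ℕ) (V : ℕ → Sentence → ℝ) : ℝ :=
  -((T.terms.map fun p => p.1.eval V * V n p.2).sum)

/-- `W(T(V))`: the value in world `W` of the holdings from the trade `T`,
made on day `n` against the prices `V`. -/
noncomputable def Trade.value (T : Trade) (n : ℕ) (V : ℕ → Sentence → ℝ) (W : World) : ℝ :=
  T.cash n V + (T.terms.map fun p => p.1.eval V * W.val p.2).sum

/-- A fixed computable encoding of trading strategies into `ℕ`. -/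
def encodeTrade (T : Trade) : ℕ :=
  encodeList (fun p => Nat.pair (encodeFeature p.1) (encodeSentence p.2)) T.terms

/-- A trader: one trading strategy for each day. -/
structure Trader : Type where
  strat : ℕ → Trade
  rank_le : ∀ n, (strat n).RankLE n

/-- Polynomial-time computability: computable by a Turing machine in time polynomial in
the input written in unary (i.e. polynomial in `n`). -/
def PolyTimeComputable (f : ℕ → ℕ) : Prop :=
  Nonempty (Turing.TM2ComputableInPolyTime Computability.unaryEncodingNat.encode
    Computability.unaryEncodingNat.encode f)

/-- A trader is efficiently computable if the expression of its day-`n` trading strategy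
is computable in time polynomial in `n`. -/
def Trader.EC (T : Trader) : Prop := PolyTimeComputable fun n => encodeTrade (T.strat n)

/-- A market: a computable sequence of valuations with values in `ℚ ∩ [0,1]`. -/
structure Market : Type where
  price : ℕ → Sentence → ℚ
  nonneg : ∀ n φ, 0 ≤ price n φ
  le_one : ∀ n φ, price n φ ≤ 1
  comp : ∃ g : ℕ → ℕ, Computable g ∧
    ∀ n φ, g (Nat.pair n (encodeSentence φ)) = Encodable.encode (price n φ)

/-- The market price, as a real number. -/
noncomputable def Market.val (P : Market) (n : ℕ) (φ : Sentence) : ℝ := (P.price n φ : ℝ)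

/-- The market, viewed as a sequence of real-valued valuations. -/
noncomputable def Market.valSeq (P : Market) : ℕ → Sentence → ℝ := fun n φ => (P.price n φ : ℝ)

/-- A deductive process: a computable nested sequence of finite sets of sentences. -/
structure DeductiveProcess : Type where
  sets : ℕ → List Sentence
  nested : ∀ n, ∀ φ ∈ sets n, φ ∈ sets (n + 1)
  comp : ∃ g : ℕ → ℕ, Computable g ∧ ∀ n, g n = encodeList encodeSentence (sets n)

/-- The worlds plausible on day `n`: those propositionally consistent with `D_n`. -/
def DeductiveProcess.PCn (D : DeductiveProcess) (n : ℕ) : Set World :=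
  PC {φ | φ ∈ D.sets n}

/-- `D_∞`, the union of the finite stages of the deductive process. -/
def DeductiveProcess.limit (D : DeductiveProcess) : Set Sentence := {φ | ∃ n, φ ∈ D.sets n}

/-- `D` is `Γ`-complete if `PC(D_∞) = PC(Γ)`. -/
def GammaComplete (D : DeductiveProcess) (Γ : Set Sentence) : Prop := PC D.limit = PC Γ

/-- `W(Σ_{i≤n} T_i(P))`: the value of a trader's net holdings through day `n` in world `W`. -/
noncomputable def holdings (T : Trader) (P : Market) (n : ℕ) (W : World) : ℝ :=
  ∑ i ∈ Finset.range (n + 1), (T.strat i).value i P.valSeq W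

/-- The set of plausible values of a trader's holdings across all days. -/
def plausibleValues (T : Trader) (P : Market) (D : DeductiveProcess) : Set ℝ :=
  {x | ∃ n, ∃ W ∈ D.PCn n, x = holdings T P n W}

/-- A trader exploits a market relative to a deductive process if its plausible
holdings values are bounded below but unbounded above. -/
def Exploits (T : Trader) (P : Market) (D : DeductiveProcess) : Prop :=
  BddBelow (plausibleValues T P D) ∧ ¬BddAbove (plausibleValues T P D)

/-- The logical induction criterion: no efficiently computable trader exploits `P`
relative to `D`. -/
def LogicalInductor (P : Market) (D : DeductiveProcess) : Prop :=
  ∀ T : Trader, T.EC → ¬Exploits T P D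

/-- A logical inductor over a theory: a logical inductor over some `Γ`-complete
deductive process. -/
def LogicalInductorOver (P : Market) (Γ : Set Sentence) : Prop :=
  ∃ D : DeductiveProcess, GammaComplete D Γ ∧ LogicalInductor P D

/-- Computably enumerable theories. -/
def CETheory (Γ : Set Sentence) : Prop :=
  ∃ g : ℕ → ℕ, Computable g ∧ ∀ φ, φ ∈ Γ ↔ ∃ n, g n = encodeSentence φ + 1

/-- Efficiently computable sequences of sentences. -/
def ECSentences (φ : ℕ → Sentence) : Prop := PolyTimeComputable fun n => encodeSentence (φ n)

/-- Efficiently computable sequences of rational numbers. -/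
def ECRats (p : ℕ → ℚ) : Prop := PolyTimeComputable fun n => Encodable.encode (p n)

end LogicalInduction

/-!
A portfolio of sentences with rational weights, bought anew every day, is an efficiently
computable trader, since its day-`n` trade is a constant expression. Suppose `Γ` forces the
payoff of the portfolio to be `β` in every world. By compactness of the space of worlds, the
payoff is then `β` in every world plausible from some day on. If the prices of the portfolio
converged to `c < β`, its holder would gain about `β - c` per day in every plausible world:
its holdings would be bounded below and unbounded above, contradicting the logical induction
criterion. Applied to the negated portfolio this gives `c = β`. The three coherence
conditions are this fact for the portfolios `φ`, `φ` and `(φ ∨ ψ) - φ - ψ`, whose payoffs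
are forced to be `1`, `0` and `0`.
-/

def StateTransition.EvalsToInTime.single {σ : Type*} {f : σ → Option σ} {a b : σ}
    (h : f a = some b) : StateTransition.EvalsToInTime f a (some b) 1 :=
  ⟨⟨1, h⟩, le_rfl⟩

namespace Turing

open Computability StateTransition Turing.TM2.Stmt

/-- Label `none` pops the input until the stack is empty; label `some i` then pushes
`l[i-1], …, l[0]`, leaving `l` on the stack. -/
def constComputer (l : List Bool) : FinTM2 where
  K := Unit
  k₀ := ⟨⟩
  k₁ := ⟨⟩
  Γ _ := Bool
  Λ := Option (Fin (l.length + 1))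
  main := none
  σ := Option Bool
  initialState := none
  m
    | none => pop ⟨⟩ (fun _ v => v)
        (branch Option.isSome (goto fun _ => none) (goto fun _ => some (Fin.last _)))
    | some i => if h : (i : ℕ) = 0 then halt
        else push ⟨⟩ (fun _ => l[(i : ℕ) - 1]) (goto fun _ => some ⟨i - 1, by omega⟩)

def constComputer_evalsToInTime_erase (l : List Bool) : ∀ (s : List Bool) (v : Option Bool),
    EvalsToInTime (constComputer l).step ⟨some none, v, fun _ => s⟩
      (some ⟨some (some (Fin.last _)), none, fun _ => []⟩) (s.length + 1)
  | [], _ => EvalsToInTime.single rfl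
  | b :: s, _ =>
    EvalsToInTime.trans _ 1 _ _ _ _ (.single rfl) (constComputer_evalsToInTime_erase l s (some b))

def constComputer_evalsToInTime_push (l : List Bool) :
    ∀ (i : ℕ) (hi : i < l.length + 1) (s : List Bool),
    EvalsToInTime (constComputer l).step ⟨some (some ⟨i, hi⟩), none, fun _ => s⟩
      (some ⟨none, none, fun _ => l.take i ++ s⟩) (i + 1)
  | 0, hi, s => EvalsToInTime.single rfl
  | i + 1, hi, s => by
    rw [List.take_succ_eq_append_getElem (by omega), List.append_assoc]
    exact EvalsToInTime.trans _ 1 _ _ _ _ (.single rfl)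
      (constComputer_evalsToInTime_push l i (by omega) (l[i] :: s))

lemma initList_constComputer (l s : List Bool) :
    initList (constComputer l) (s.map (Equiv.refl Bool).invFun) =
      ⟨some none, none, fun _ => s⟩ :=
  congrArg (initList _) (List.map_id s)

lemma haltList_constComputer (l s : List Bool) :
    haltList (constComputer l) (s.map (Equiv.refl Bool).invFun) = ⟨none, none, fun _ => s⟩ :=
  congrArg (haltList _) (List.map_id s)

noncomputable def constComputableInPolyTime {α β : Type} (ea : α → List Bool)
    (eb : β → List Bool) (b : β) :
    TM2ComputableInPolyTime ea eb fun _ => b where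
  tm := constComputer (eb b)
  inputAlphabet := Equiv.refl Bool
  outputAlphabet := Equiv.refl Bool
  time := Polynomial.X + Polynomial.C ((eb b).length + 2)
  outputsFun a := by
    have h := EvalsToInTime.trans _ _ _ _ _ _
      (constComputer_evalsToInTime_erase (eb b) (ea a) none)
      (constComputer_evalsToInTime_push (eb b) _ (Nat.lt_succ_self _) [])
    rw [List.take_length, List.append_nil] at h
    rw [TM2OutputsInTime, initList_constComputer, Option.map_some, haltList_constComputer]
    refine ⟨h.toEvalsTo, h.steps_le_m.trans ?_⟩
    simp only [Polynomial.eval_add, Polynomial.eval_X, Polynomial.eval_C]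
    omega

end Turing

namespace LogicalInduction

open Topology Finset

lemma polyTimeComputable_const (c : ℕ) : PolyTimeComputable fun _ => c :=
  ⟨Turing.constComputableInPolyTime _ _ c⟩

lemma tendsto_sum_range_atTop_of_tendsto_pos {u : ℕ → ℝ} {l : ℝ} (hl : 0 < l)
    (hu : Tendsto u atTop (𝓝 l)) : Tendsto (fun n => ∑ i ∈ range n, u i) atTop atTop := by
  refine (tendsto_natCast_atTop_atTop.atTop_mul_pos hl hu.cesaro).congr' ?_
  filter_upwards [eventually_ne_atTop 0] with n hn
  field_simp

lemma World.PCons.val_eq_zero_of_not {W : World} (hW : W.PCons) {φ : Sentence}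
    (h : W (.not φ) = true) : W.val φ = 0 := by
  rw [hW.1] at h
  simp_all [World.val]

lemma World.PCons.val_or_of_not_and {W : World} (hW : W.PCons) {φ ψ : Sentence}
    (h : W (.not (.and φ ψ)) = true) : W.val (.or φ ψ) = W.val φ + W.val ψ := by
  rw [hW.1, hW.2.1] at h
  simp only [World.val, hW.2.2.1]
  cases hφ : W φ <;> cases hψ : W ψ <;> simp_all

lemma isClosed_setOf_apply_eq (χ φ ψ : Sentence) (g : Bool → Bool → Bool) :
    IsClosed {W : World | W χ = g (W φ) (W ψ)} :=
  isClosed_eq (continuous_apply χ) <| (continuous_of_discreteTopology (f := g.uncurry)).comp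
    (by fun_prop : Continuous fun W : World => (W φ, W ψ))

lemma isClosed_setOf_PCons : IsClosed {W : World | W.PCons} := by
  simp only [World.PCons, Set.ofPred_and, Set.ofPred_forall]
  refine .inter (isClosed_iInter fun φ => isClosed_setOf_apply_eq _ φ φ fun a _ => !a) ?_
  refine .inter (isClosed_iInter fun φ => isClosed_iInter fun ψ =>
    isClosed_setOf_apply_eq _ φ ψ (· && ·)) ?_
  refine .inter (isClosed_iInter fun φ => isClosed_iInter fun ψ =>
    isClosed_setOf_apply_eq _ φ ψ (· || ·)) ?_
  refine .inter (isClosed_iInter fun φ => isClosed_iInter fun ψ =>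
    isClosed_setOf_apply_eq _ φ ψ fun a b => !a || b) ?_
  exact isClosed_iInter fun φ => isClosed_iInter fun ψ =>
    isClosed_setOf_apply_eq _ φ ψ (· == ·)

lemma isClosed_PC (D : Set Sentence) : IsClosed (PC D) := by
  simp only [PC, Set.ofPred_and, Set.ofPred_forall]
  exact isClosed_setOf_PCons.inter <| isClosed_iInter fun φ => isClosed_iInter fun _ =>
    isClosed_eq (continuous_apply φ) continuous_const

lemma PC_anti {D E : Set Sentence} (h : D ⊆ E) : PC E ⊆ PC D :=
  fun _ hW => ⟨hW.1, fun φ hφ => hW.2 φ (h hφ)⟩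

namespace DeductiveProcess

variable (D : DeductiveProcess)

lemma antitone_PCn : Antitone D.PCn :=
  antitone_nat_of_succ_le fun n => PC_anti fun φ => D.nested n φ

lemma iInter_PCn : ⋂ n, D.PCn n = PC D.limit := by
  refine Set.Subset.antisymm (fun W hW => ?_)
    (Set.subset_iInter fun n => PC_anti fun φ hφ => ⟨n, hφ⟩)
  rw [Set.mem_iInter] at hW
  exact ⟨(hW 0).1, fun φ ⟨n, hφ⟩ => (hW n).2 φ hφ⟩

lemma eventually_PCn_subset {U : Set World} (hU : IsOpen U) (h : PC D.limit ⊆ U) :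
    ∀ᶠ n in atTop, D.PCn n ⊆ U := by
  obtain ⟨m, hm⟩ := exists_subset_nhds_of_isCompact' D.antitone_PCn.directed_ge
    (fun n => (isClosed_PC _).isCompact) (fun n => isClosed_PC _)
    (fun W hW => hU.mem_nhds (h (D.iInter_PCn ▸ hW)))
  exact eventually_atTop.2 ⟨m, fun n hn => (D.antitone_PCn hn).trans hm⟩

end DeductiveProcess

lemma GammaComplete.eventually_forall_PCn {D : DeductiveProcess} {Γ : Set Sentence}
    (hD : GammaComplete D Γ) {χ : Sentence} (hχ : Proves Γ χ) :
    ∀ᶠ n in atTop, ∀ W ∈ D.PCn n, W χ = true :=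
  D.eventually_PCn_subset
    ((continuous_apply (A := fun _ => Bool) χ).isOpen_preimage {true} (isOpen_discrete _))
    (hD ▸ hχ)

/-- A portfolio `[(q₁, φ₁), …, (qₖ, φₖ)]` is traded by buying `qⱼ` shares of each `φⱼ`
every day. -/
abbrev Portfolio : Type := List (ℚ × Sentence)

namespace Portfolio

variable (L : Portfolio)

def trade : Trade := ⟨L.map fun p => (.const p.1, p.2)⟩

def trader : Trader where
  strat _ := L.trade
  rank_le n p hp := by
    obtain ⟨q, -, rfl⟩ := List.mem_map.1 hp
    exact Nat.zero_le n

lemma trader_EC : L.trader.EC := polyTimeComputable_const (encodeTrade L.trade)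

def neg : Portfolio := L.map fun p => (-p.1, p.2)

noncomputable def payoff (W : World) : ℝ := (L.map fun p => (p.1 : ℝ) * W.val p.2).sum

noncomputable def cost (P : Market) (n : ℕ) : ℝ := (L.map fun p => (p.1 : ℝ) * P.val n p.2).sum

noncomputable def size : ℝ := (L.map fun p => |(p.1 : ℝ)|).sum

lemma size_nonneg : 0 ≤ L.size :=
  List.sum_nonneg fun _ hx => by
    obtain ⟨p, -, rfl⟩ := List.mem_map.1 hx
    exact abs_nonneg _

lemma neg_size_le_payoff (W : World) : -L.size ≤ L.payoff W := by
  rw [size, List.sum_neg, List.map_map]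
  refine List.sum_le_sum fun p _ => ?_
  have hval : |W.val p.2| ≤ 1 := by unfold World.val; split <;> simp
  calc -|(p.1 : ℝ)| ≤ -|p.1 * W.val p.2| := by
        rw [neg_le_neg_iff, abs_mul]
        exact mul_le_of_le_one_right (abs_nonneg _) hval
    _ ≤ p.1 * W.val p.2 := neg_abs_le _

@[simp] lemma payoff_neg (W : World) : L.neg.payoff W = -L.payoff W := by
  simp [payoff, neg, List.sum_neg, Function.comp_def]

@[simp] lemma cost_neg (P : Market) (n : ℕ) : L.neg.cost P n = -L.cost P n := by
  simp [cost, neg, List.sum_neg, Function.comp_def]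

lemma holdings_trader (P : Market) (n : ℕ) (W : World) :
    holdings L.trader P n W = ∑ i ∈ range (n + 1), (L.payoff W - L.cost P i) := by
  refine Finset.sum_congr rfl fun i _ => ?_
  simp only [trader, trade, Trade.value, Trade.cash, payoff, cost, List.map_map,
    Function.comp_def, Feature.eval, Market.valSeq, Market.val]
  ring

theorem exploits_trader {P : Market} {D : DeductiveProcess} {β c : ℝ}
    (hne : ∀ n, (D.PCn n).Nonempty)
    (hpay : ∀ᶠ n in atTop, ∀ W ∈ D.PCn n, L.payoff W = β)
    (hcost : Tendsto (L.cost P) atTop (𝓝 c)) (hlt : c < β) : Exploits L.trader P D := by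
  set S : ℕ → ℝ := fun n => ∑ i ∈ range (n + 1), (β - L.cost P i)
  have hS : Tendsto S atTop atTop :=
    (tendsto_sum_range_atTop_of_tendsto_pos (sub_pos.2 hlt)
      (tendsto_const_nhds.sub hcost)).comp (tendsto_add_atTop_nat 1)
  have hhold : ∀ n W, holdings L.trader P n W = S n + (n + 1) * (L.payoff W - β) := by
    intro n W
    simp only [L.holdings_trader, S, sum_sub_distrib, sum_const, card_range, nsmul_eq_mul,
      Nat.cast_add, Nat.cast_one]
    ring
  obtain ⟨m, hm⟩ := eventually_atTop.1 hpay
  have hforced : ∀ n, m ≤ n → ∀ W ∈ D.PCn n, holdings L.trader P n W = S n := by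
    intro n hn W hW
    rw [hhold, hm n hn W hW, sub_self, mul_zero, add_zero]
  constructor
  · obtain ⟨K, hK⟩ := bddBelow_range_of_tendsto_atTop_atTop hS
    refine ⟨K - m * (L.size + |β|), ?_⟩
    rintro _ ⟨n, W, hW, rfl⟩
    have hSn : K ≤ S n := hK ⟨n, rfl⟩
    have hA : 0 ≤ L.size + |β| := add_nonneg L.size_nonneg (abs_nonneg β)
    rcases le_or_gt m n with hmn | hnm
    · rw [hforced n hmn W hW]
      nlinarith [(Nat.cast_nonneg m : (0 : ℝ) ≤ m)]
    · have hpayoff : -(L.size + |β|) ≤ L.payoff W - β := by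
        linarith [L.neg_size_le_payoff W, le_abs_self β]
      have hn : (n : ℝ) + 1 ≤ m := by exact_mod_cast hnm
      rw [hhold]
      nlinarith
  · rw [not_bddAbove_iff]
    intro M
    obtain ⟨n, hMn, hmn⟩ := ((hS.eventually_gt_atTop M).and (eventually_ge_atTop m)).exists
    obtain ⟨W, hW⟩ := hne n
    exact ⟨_, ⟨n, W, hW, rfl⟩, by rwa [hforced n hmn W hW]⟩

end Portfolio

theorem LogicalInductor.payoff_le_of_tendsto_cost {P : Market} {D : DeductiveProcess}
    (hLI : LogicalInductor P D) (hne : ∀ n, (D.PCn n).Nonempty) (L : Portfolio) {β c : ℝ}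
    (hpay : ∀ᶠ n in atTop, ∀ W ∈ D.PCn n, L.payoff W = β)
    (hcost : Tendsto (L.cost P) atTop (𝓝 c)) : β ≤ c :=
  le_of_not_gt fun hlt => hLI _ L.trader_EC (L.exploits_trader hne hpay hcost hlt)

theorem LogicalInductor.limit_cost_eq_of_proves {P : Market} {D : DeductiveProcess}
    {Γ : Set Sentence} (hLI : LogicalInductor P D) (hD : GammaComplete D Γ)
    (hcon : Consistent Γ) (L : Portfolio) {χ : Sentence} (hχ : Proves Γ χ) {β c : ℝ}
    (hpay : ∀ W : World, W.PCons → W χ = true → L.payoff W = β)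
    (hcost : Tendsto (L.cost P) atTop (𝓝 c)) : c = β := by
  have hne : ∀ n, (D.PCn n).Nonempty := fun n =>
    hcon.mono (by rw [← hD, ← D.iInter_PCn]; exact Set.iInter_subset _ n)
  have hpay' : ∀ᶠ n in atTop, ∀ W ∈ D.PCn n, L.payoff W = β :=
    (hD.eventually_forall_PCn hχ).mono fun n h W hW => hpay W hW.1 (h W hW)
  refine le_antisymm ?_ (hLI.payoff_le_of_tendsto_cost hne L hpay' hcost)
  refine neg_le_neg_iff.1 (hLI.payoff_le_of_tendsto_cost hne L.neg (by simpa using hpay') ?_)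
  simpa [funext (L.cost_neg P)] using hcost.neg

theorem limit_coherence_general (Γ : Set Sentence) (hcon : Consistent Γ)
    (P : Market) (hP : LogicalInductorOver P Γ)
    (Pinf : Sentence → ℝ)
    (hlim : ∀ φ, Filter.Tendsto (fun n => P.val n φ) Filter.atTop (nhds (Pinf φ))) :
    (∀ φ, Proves Γ φ → Pinf φ = 1) ∧
    (∀ φ, Proves Γ (.not φ) → Pinf φ = 0) ∧
    (∀ φ ψ, Proves Γ (.not (.and φ ψ)) → Pinf (.or φ ψ) = Pinf φ + Pinf ψ) := by
  obtain ⟨D, hD, hLI⟩ := hP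
  have hcost : ∀ φ, Tendsto (Portfolio.cost [(1, φ)] P) atTop (𝓝 (Pinf φ)) := fun φ =>
    (hlim φ).congr fun n => by simp [Portfolio.cost]
  refine ⟨fun φ hφ => ?_, fun φ hφ => ?_, fun φ ψ hφψ => ?_⟩
  · refine hLI.limit_cost_eq_of_proves hD hcon [(1, φ)] hφ (fun W _ hWφ => ?_) (hcost φ)
    simp [Portfolio.payoff, World.val, hWφ]
  · refine hLI.limit_cost_eq_of_proves hD hcon [(1, φ)] hφ (fun W hW hWφ => ?_) (hcost φ)
    simp [Portfolio.payoff, hW.val_eq_zero_of_not hWφ]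
  · have h : Pinf (.or φ ψ) - Pinf φ - Pinf ψ = 0 :=
      hLI.limit_cost_eq_of_proves hD hcon [(1, .or φ ψ), (-1, φ), (-1, ψ)] hφψ
        (fun W hW hWφψ => ?_)
        ((((hlim (.or φ ψ)).sub (hlim φ)).sub (hlim ψ)).congr fun n => by
          simp only [Portfolio.cost, List.map_cons, List.map_nil, List.sum_cons, List.sum_nil,
            Rat.cast_one, Rat.cast_neg, one_mul, neg_mul, add_zero]
          ring)
    · linarith
    · simp only [Portfolio.payoff, List.map_cons, List.map_nil, List.sum_cons, List.sum_nil,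
        Rat.cast_one, Rat.cast_neg, one_mul, neg_mul, add_zero, hW.val_or_of_not_and hWφψ]
      ring

/-- **Limit coherence**: the limiting prices of a logical inductor satisfy Gaifman's
coherence conditions. -/
theorem limit_coherence (Γ : Set Sentence) (hcon : Consistent Γ) (hce : CETheory Γ)
    (P : Market) (hP : LogicalInductorOver P Γ)
    (Pinf : Sentence → ℝ)
    (hlim : ∀ φ, Filter.Tendsto (fun n => P.val n φ) Filter.atTop (nhds (Pinf φ))) :
    (∀ φ, Proves Γ φ → Pinf φ = 1) ∧
    (∀ φ, Proves Γ (.not φ) → Pinf φ = 0) ∧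
    (∀ φ ψ, Proves Γ (.not (.and φ ψ)) → Pinf (.or φ ψ) = Pinf φ + Pinf ψ) :=
  limit_coherence_general Γ hcon P hP Pinf hlim

end LogicalInduction
end

section
/- Let (w_n)_{n≥1} be a sequence of reals in [0,1] with w_1 > 0 and Σ_{n} w_n = ∞, and let (d_n)_{n≥1} be a sequence of reals in [−1,1]. Define B_n := (Σ_{i≤n} w_i d_i)/(Σ_{i≤n} w_i). If liminf_{n→∞} B_n ≤ 0 ≤ limsup_{n→∞} B_n, then 0 is a limit point of (B_n): there is a subsequence of (B_n) converging to 0. -/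
/-!
Write `B n` for the weighted averages and `S n` for the partial sums of the weights. From
`S (n+1) * (B (n+1) - B n) = w (n+1) * (d (n+1) - B n)` and `|B n| ≤ 1` the steps satisfy
`|B (n+1) - B n| ≤ 2 / S (n+1) → 0`. Once the steps are shorter than `2ε` the sequence cannot jump
across the gap `(-ε, ε)`; so if it eventually avoided the gap it would eventually stay on one
side, forcing `ε ≤ liminf B` or `limsup B ≤ -ε`.
-/

open Filter Topology Finset

theorem forall_ge_stays_on_one_side_of_gap {u : ℕ → ℝ} {a ε : ℝ} {N : ℕ}
    (hgap : ∀ n ≥ N, ε ≤ |u n - a|) (hstep : ∀ n ≥ N, |u (n + 1) - u n| < 2 * ε) :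
    (∀ n ≥ N, a + ε ≤ u n) ∨ ∀ n ≥ N, u n ≤ a - ε := by
  have hside : ∀ n ≥ N, (a + ε ≤ u (n + 1) ↔ a + ε ≤ u n) := fun n hn => by
    have h₀ := le_abs'.1 (hgap n hn)
    have h₁ := le_abs'.1 (hgap (n + 1) (Nat.le_succ_of_le hn))
    have := abs_lt.1 (hstep n hn)
    constructor <;> intro h <;> rcases h₀ with h₀ | h₀ <;> rcases h₁ with h₁ | h₁ <;> linarith
  have hconst : ∀ n ≥ N, (a + ε ≤ u n ↔ a + ε ≤ u N) := fun n hn => by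
    induction n, hn using Nat.le_induction with
    | base => rfl
    | succ n hn ih => exact (hside n hn).trans ih
  by_cases hN : a + ε ≤ u N
  · exact Or.inl fun n hn => (hconst n hn).2 hN
  · refine Or.inr fun n hn => ?_
    have := (le_abs'.1 (hgap n hn)).resolve_right fun h => hN ((hconst n hn).1 (by linarith))
    linarith

theorem mapClusterPt_of_tendsto_sub_of_liminf_le_of_le_limsup {u : ℕ → ℝ} {a : ℝ}
    (hbdd_above : IsBoundedUnder (· ≤ ·) atTop u) (hbdd_below : IsBoundedUnder (· ≥ ·) atTop u)
    (hstep : Tendsto (fun n => u (n + 1) - u n) atTop (𝓝 0))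
    (hinf : liminf u atTop ≤ a) (hsup : a ≤ limsup u atTop) :
    MapClusterPt a atTop u := by
  rw [Metric.nhds_basis_ball.mapClusterPt_iff_frequently]
  intro ε hε
  by_contra hfar
  have hgap : ∀ᶠ n in atTop, ε ≤ |u n - a| := (not_frequently.1 hfar).mono fun n hn => by
    simpa [Metric.mem_ball, Real.dist_eq] using hn
  have hshort : ∀ᶠ n in atTop, |u (n + 1) - u n| < 2 * ε := by
    simpa using (Metric.tendsto_nhds.1 hstep) (2 * ε) (by positivity)
  obtain ⟨N, hN⟩ := (hgap.and hshort).exists_forall_of_atTop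
  rcases forall_ge_stays_on_one_side_of_gap (fun n hn => (hN n hn).1) (fun n hn => (hN n hn).2)
    with habove | hbelow
  · have := le_liminf_of_le hbdd_above.isCoboundedUnder_ge (eventually_atTop.2 ⟨N, habove⟩)
    linarith
  · have := limsup_le_of_le hbdd_below.isCoboundedUnder_le (eventually_atTop.2 ⟨N, hbelow⟩)
    linarith

noncomputable def weightedAvg (w d : ℕ → ℝ) (n : ℕ) : ℝ :=
  (∑ i ∈ range (n + 1), w i * d i) / ∑ i ∈ range (n + 1), w i

namespace weightedAvg

variable {w d : ℕ → ℝ} {C : ℝ}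

theorem abs_le (hw : ∀ i, 0 ≤ w i) (hd : ∀ i, |d i| ≤ C) (n : ℕ) : |weightedAvg w d n| ≤ C := by
  have hS : 0 ≤ ∑ i ∈ range (n + 1), w i := sum_nonneg fun i _ => hw i
  have hA : |∑ i ∈ range (n + 1), w i * d i| ≤ C * ∑ i ∈ range (n + 1), w i := calc
    _ ≤ ∑ i ∈ range (n + 1), |w i * d i| := abs_sum_le_sum_abs _ _
    _ ≤ ∑ i ∈ range (n + 1), C * w i := sum_le_sum fun i _ => by
      rw [abs_mul, abs_of_nonneg (hw i), mul_comm]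
      exact mul_le_mul_of_nonneg_right (hd i) (hw i)
    _ = C * ∑ i ∈ range (n + 1), w i := (mul_sum _ _ _).symm
  rw [weightedAvg, abs_div, abs_of_nonneg hS]
  exact div_le_of_le_mul₀ hS ((abs_nonneg _).trans (hd 0)) hA

theorem succ_sub (n : ℕ) (hS : ∑ i ∈ range (n + 1), w i ≠ 0)
    (hS' : ∑ i ∈ range (n + 2), w i ≠ 0) :
    weightedAvg w d (n + 1) - weightedAvg w d n =
      w (n + 1) * (d (n + 1) - weightedAvg w d n) / ∑ i ∈ range (n + 2), w i := by
  simp only [weightedAvg, show n + 2 = n + 1 + 1 from rfl, sum_range_succ _ (n + 1)] at hS' ⊢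
  field_simp
  ring

theorem abs_succ_sub_le (hw : ∀ i, w i ∈ Set.Icc 0 1) (hd : ∀ i, |d i| ≤ C) {n : ℕ}
    (hS : 0 < ∑ i ∈ range (n + 1), w i) :
    |weightedAvg w d (n + 1) - weightedAvg w d n| ≤ 2 * C / ∑ i ∈ range (n + 2), w i := by
  have hS' : 0 < ∑ i ∈ range (n + 2), w i := by
    rw [sum_range_succ]; linarith [(hw (n + 1)).1]
  have hB := abs_le (fun i => (hw i).1) hd
  rw [succ_sub n hS.ne' hS'.ne', abs_div, abs_of_pos hS', abs_mul, abs_of_nonneg (hw _).1]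
  refine div_le_div_of_nonneg_right ?_ hS'.le
  calc w (n + 1) * |d (n + 1) - weightedAvg w d n|
      ≤ 1 * (|d (n + 1)| + |weightedAvg w d n|) :=
        mul_le_mul (hw _).2 (abs_sub _ _) (abs_nonneg _) zero_le_one
    _ ≤ 2 * C := by linarith [hd (n + 1), hB n]

theorem tendsto_succ_sub (hw : ∀ i, w i ∈ Set.Icc 0 1) (hw0 : 0 < w 0)
    (hdiv : Tendsto (fun n => ∑ i ∈ range (n + 1), w i) atTop atTop) (hd : ∀ i, |d i| ≤ C) :
    Tendsto (fun n => weightedAvg w d (n + 1) - weightedAvg w d n) atTop (𝓝 0) := by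
  have hS : ∀ n, 0 < ∑ i ∈ range (n + 1), w i := fun n =>
    hw0.trans_le (single_le_sum (fun i _ => (hw i).1) (mem_range.2 n.succ_pos))
  have hbound : Tendsto (fun n => 2 * C / ∑ i ∈ range (n + 2), w i) atTop (𝓝 0) :=
    tendsto_const_nhds.div_atTop (hdiv.comp (tendsto_add_atTop_nat 1))
  exact squeeze_zero_norm (fun n => abs_succ_sub_le hw hd (hS n)) hbound

end weightedAvg

/-- **Weighted averages with divergent weights have 0 as a limit point** whenever their
liminf and limsup lie on opposite sides of (or at) 0. -/
theorem weighted_average_zero_cluster_point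
    (w d : ℕ → ℝ) (hw : ∀ n, w n ∈ Set.Icc (0 : ℝ) 1) (hw0 : 0 < w 0)
    (hdiv : Filter.Tendsto (fun n => ∑ i ∈ Finset.range (n + 1), w i)
      Filter.atTop Filter.atTop)
    (hd : ∀ n, d n ∈ Set.Icc (-1 : ℝ) 1)
    (h1 : Filter.liminf
      (fun n => (∑ i ∈ Finset.range (n + 1), w i * d i) / ∑ i ∈ Finset.range (n + 1), w i)
      Filter.atTop ≤ 0)
    (h2 : 0 ≤ Filter.limsup
      (fun n => (∑ i ∈ Finset.range (n + 1), w i * d i) / ∑ i ∈ Finset.range (n + 1), w i)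
      Filter.atTop) :
    MapClusterPt 0 Filter.atTop
      (fun n => (∑ i ∈ Finset.range (n + 1), w i * d i) /
        ∑ i ∈ Finset.range (n + 1), w i) := by
  have hd' : ∀ n, |d n| ≤ 1 := fun n => abs_le.2 (hd n)
  have hB := weightedAvg.abs_le (fun n => (hw n).1) hd'
  exact mapClusterPt_of_tendsto_sub_of_liminf_le_of_le_limsup (u := weightedAvg w d)
    (isBoundedUnder_of ⟨1, fun n => (abs_le.1 (hB n)).2⟩)
    (isBoundedUnder_of ⟨-1, fun n => (abs_le.1 (hB n)).1⟩)
    (weightedAvg.tendsto_succ_sub hw hw0 hdiv hd') h1 h2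
end
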